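/- arXiv:1204.3232 — 2 statements merged into one kernel-verified Lean document; each statement's English description precedes it below -/
import Mathlib

section
/- For K ≥ K' and all u ≥ 0 in the common domain, and N ≤ N' in [2,∞], the comparison drifts satisfy Ψ_{K,N}(u) ≤ Ψ_{K',N'}(u), where Ψ_{K,N}(u) = -2K t_{K/(N-1)}(u/2) for N < ∞ and Ψ_{K,∞}(u) = -Ku. -/
open Real ENNReal

noncomputable def sK (K θ : ℝ) : ℝ :=
  if 0 < K then Real.sin (Real.sqrt K * θ) / Real.sqrt K
  else if K = 0 then θ
  else Real.sinh (Real.sqrt (-K) * θ) / Real.sqrt (-K)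

noncomputable def cK (K θ : ℝ) : ℝ :=
  if 0 < K then Real.cos (Real.sqrt K * θ)
  else if K = 0 then 1
  else Real.cosh (Real.sqrt (-K) * θ)

noncomputable def tK (K θ : ℝ) : ℝ := sK K θ / cK K θ

/-- The comparison drift `Ψ_{K,N}`, with `N ∈ [2,∞]` encoded as `ℝ≥0∞`. -/
noncomputable def Psi (K : ℝ) (N : ℝ≥0∞) (u : ℝ) : ℝ :=
  if N = ⊤ then -K * u else -2 * K * tK (K / (N.toReal - 1)) (u / 2)

/-!
With `κ = K / (N - 1)` and `θ = u / 2` we have `Ψ_{K,N}(u) = -2 (N - 1) · κ t_κ(θ)`, and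
`Ψ_{K,∞}(u) = -2K t_0(θ)` since `t_0(θ) = θ`. Everything follows from two monotonicity facts in
the curvature parameter, for `θ ≥ 0` in the domain:
* `κ ↦ t_κ(θ)` is nondecreasing: `tan y / y` increases on `(0, π/2)` and `tanh y / y` decreases
  on `(0, ∞)` (concavity of `sin`, convexity of `sinh` on `[0, ∞)`), and both branches meet `θ`
  at `κ = 0`;
* `κ ↦ κ t_κ(θ)` is nondecreasing, which for `κ < 0` is the monotonicity of `x ↦ x tanh (x θ)`.
The second gives monotonicity in `K` at fixed `N`. The first, applied to `K s` with
`s = 1 / (N - 1)` decreasing to `0 = 1 / ∞`, gives monotonicity in `N`.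
-/

open Set

theorem ConvexOn.mul_le_mul_of_map_zero {D : Set ℝ} {f : ℝ → ℝ} (hf : ConvexOn ℝ D f)
    (h0 : 0 ∈ D) (hf0 : f 0 = 0) {s t : ℝ} (hs : 0 ≤ s) (hst : s ≤ t) (ht : t ∈ D) :
    t * f s ≤ s * f t := by
  rcases hs.eq_or_lt with rfl | hs
  · simp [hf0]
  have ht0 : 0 < t := hs.trans_le hst
  -- `s` is the convex combination `(1 - s / t) • 0 + (s / t) • t`
  have hconv := hf.2 h0 ht (sub_nonneg.2 ((div_le_one ht0).2 hst)) (div_nonneg hs.le ht0.le)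
    (sub_add_cancel 1 (s / t))
  simp only [smul_eq_mul, mul_zero, zero_add, hf0, div_mul_cancel₀ s ht0.ne'] at hconv
  rw [div_mul_eq_mul_div, le_div_iff₀ ht0] at hconv
  linarith

theorem ConcaveOn.mul_le_mul_of_map_zero {D : Set ℝ} {f : ℝ → ℝ} (hf : ConcaveOn ℝ D f)
    (h0 : 0 ∈ D) (hf0 : f 0 = 0) {s t : ℝ} (hs : 0 ≤ s) (hst : s ≤ t) (ht : t ∈ D) :
    s * f t ≤ t * f s := by
  simpa only [Pi.neg_apply, mul_neg, neg_le_neg_iff] using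
    hf.neg.mul_le_mul_of_map_zero h0 (by simp [hf0]) hs hst ht

namespace Real

theorem convexOn_sinh_Ici : ConvexOn ℝ (Ici 0) sinh := by
  refine MonotoneOn.convexOn_of_deriv (convex_Ici 0) continuous_sinh.continuousOn
    differentiable_sinh.differentiableOn ?_
  rw [deriv_sinh, interior_Ici]
  intro x hx y hy hxy
  exact cosh_le_cosh.2 (by rwa [abs_of_pos hx, abs_of_pos hy])

theorem sinh_le_mul_cosh {x : ℝ} (hx : 0 ≤ x) : sinh x ≤ x * cosh x := by
  rcases hx.eq_or_lt with rfl | hx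
  · simp
  have := convexOn_sinh_Ici.slope_le_of_hasDerivAt self_mem_Ici hx.le hx (hasDerivAt_sinh x)
  rwa [slope_def_field, sinh_zero, sub_zero, sub_zero, div_le_iff₀ hx, mul_comm] at this

theorem tanh_le_self {x : ℝ} (hx : 0 ≤ x) : tanh x ≤ x := by
  rw [tanh_eq_sinh_div_cosh, div_le_iff₀ (cosh_pos x)]
  exact sinh_le_mul_cosh hx

theorem tanh_le_tanh {x y : ℝ} (h : x ≤ y) : tanh x ≤ tanh y := by
  rwa [← artanh_le_artanh_iff ⟨neg_one_lt_tanh x, tanh_lt_one x⟩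
    ⟨neg_one_lt_tanh y, tanh_lt_one y⟩, artanh_tanh, artanh_tanh]

theorem tanh_nonneg {x : ℝ} (hx : 0 ≤ x) : 0 ≤ tanh x := by
  simpa using tanh_le_tanh hx

theorem mul_tan_le_mul_tan {a b : ℝ} (ha : 0 ≤ a) (hab : a ≤ b) (hb : b < π / 2) :
    b * tan a ≤ a * tan b := by
  have hca : 0 < cos a := cos_pos_of_mem_Ioo ⟨by linarith [pi_pos], by linarith⟩
  have hcb : 0 < cos b := cos_pos_of_mem_Ioo ⟨by linarith [pi_pos], hb⟩
  -- `sin x / x` decreases on `(0, π]`: compare it at `b - a` and `a + b`, then expand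
  have key := strictConcaveOn_sin_Icc.concaveOn.mul_le_mul_of_map_zero ⟨le_rfl, pi_pos.le⟩
    sin_zero (s := b - a) (t := a + b) (by linarith) (by linarith) ⟨by linarith, by linarith⟩
  rw [sin_add, sin_sub] at key
  rw [tan_eq_sin_div_cos, tan_eq_sin_div_cos, mul_div_assoc', mul_div_assoc',
    div_le_div_iff₀ hca hcb]
  linarith

theorem mul_tanh_le_mul_tanh {a b : ℝ} (ha : 0 ≤ a) (hab : a ≤ b) :
    a * tanh b ≤ b * tanh a := by
  have key := convexOn_sinh_Ici.mul_le_mul_of_map_zero self_mem_Ici sinh_zero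
    (s := b - a) (t := a + b) (by linarith) (by linarith) (by simp only [mem_Ici]; linarith)
  rw [sinh_add, sinh_sub] at key
  rw [tanh_eq_sinh_div_cosh, tanh_eq_sinh_div_cosh, mul_div_assoc', mul_div_assoc',
    div_le_div_iff₀ (cosh_pos b) (cosh_pos a)]
  linarith

end Real

section ComparisonTangent

variable {κ κ₁ κ₂ θ : ℝ}

theorem tK_of_pos (h : 0 < κ) : tK κ θ = tan (√κ * θ) / √κ := by
  rw [tK, sK, cK, if_pos h, if_pos h, tan_eq_sin_div_cos, div_right_comm]

theorem tK_of_neg (h : κ < 0) : tK κ θ = tanh (√(-κ) * θ) / √(-κ) := by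
  rw [tK, sK, cK, if_neg h.not_gt, if_neg h.ne, if_neg h.not_gt, if_neg h.ne,
    tanh_eq_sinh_div_cosh, div_right_comm]

theorem tK_zero_left (θ : ℝ) : tK 0 θ = θ := by
  simp [tK, sK, cK]

theorem tK_zero_right (κ : ℝ) : tK κ 0 = 0 := by
  simp [tK, sK]

theorem self_le_tK (hκ : 0 ≤ κ) (hθ : 0 ≤ θ) (hdom : 0 < κ → √κ * θ < π / 2) : θ ≤ tK κ θ := by
  rcases hκ.eq_or_lt with rfl | hκ
  · rw [tK_zero_left]
  rw [tK_of_pos hκ, le_div_iff₀ (sqrt_pos.2 hκ), mul_comm]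
  exact le_tan (by positivity) (hdom hκ)

theorem tK_le_self (hκ : κ ≤ 0) (hθ : 0 ≤ θ) : tK κ θ ≤ θ := by
  rcases hκ.eq_or_lt with rfl | hκ
  · rw [tK_zero_left]
  rw [tK_of_neg hκ, div_le_iff₀ (sqrt_pos.2 (neg_pos.2 hκ)), mul_comm]
  exact tanh_le_self (by positivity)

theorem tK_nonneg (hθ : 0 ≤ θ) (hdom : 0 < κ → √κ * θ < π / 2) : 0 ≤ tK κ θ := by
  rcases lt_or_ge κ 0 with hκ | hκ
  · rw [tK_of_neg hκ]
    exact div_nonneg (tanh_nonneg (by positivity)) (sqrt_nonneg _)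
  · exact hθ.trans (self_le_tK hκ hθ hdom)

theorem mul_tK_of_nonpos (hκ : κ ≤ 0) : κ * tK κ θ = -(√(-κ) * tanh (√(-κ) * θ)) := by
  rcases hκ.eq_or_lt with rfl | hκ
  · simp
  have hx := sqrt_pos.2 (neg_pos.2 hκ)
  have hκx : κ = -√(-κ) ^ 2 := by rw [sq_sqrt (neg_nonneg.2 hκ.le), neg_neg]
  rw [tK_of_neg hκ]
  set x := √(-κ)
  rw [hκx]
  field_simp

theorem tK_le_tK_of_pos (hθ : 0 ≤ θ) (h₁ : 0 < κ₁) (h₁₂ : κ₁ ≤ κ₂) (hdom : √κ₂ * θ < π / 2) :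
    tK κ₁ θ ≤ tK κ₂ θ := by
  rcases hθ.eq_or_lt with rfl | hθ
  · simp [tK_zero_right]
  have hx₁ := sqrt_pos.2 h₁
  have hx₂ := sqrt_pos.2 (h₁.trans_le h₁₂)
  have key := mul_tan_le_mul_tan (by positivity)
    (mul_le_mul_of_nonneg_right (sqrt_le_sqrt h₁₂) hθ.le) hdom
  rw [tK_of_pos h₁, tK_of_pos (h₁.trans_le h₁₂), div_le_div_iff₀ hx₁ hx₂]
  refine le_of_mul_le_mul_left ?_ hθ
  linarith

theorem tK_le_tK_of_neg (hθ : 0 ≤ θ) (h₁₂ : κ₁ ≤ κ₂) (h₂ : κ₂ < 0) : tK κ₁ θ ≤ tK κ₂ θ := by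
  rcases hθ.eq_or_lt with rfl | hθ
  · simp [tK_zero_right]
  have hx₁ := sqrt_pos.2 (neg_pos.2 (h₁₂.trans_lt h₂))
  have hx₂ := sqrt_pos.2 (neg_pos.2 h₂)
  have key := mul_tanh_le_mul_tanh (by positivity)
    (mul_le_mul_of_nonneg_right (sqrt_le_sqrt (neg_le_neg h₁₂)) hθ.le)
  rw [tK_of_neg (h₁₂.trans_lt h₂), tK_of_neg h₂, div_le_div_iff₀ hx₁ hx₂]
  refine le_of_mul_le_mul_left ?_ hθ
  linarith

theorem tK_le_tK (hθ : 0 ≤ θ) (h₁₂ : κ₁ ≤ κ₂) (hdom : 0 < κ₂ → √κ₂ * θ < π / 2) :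
    tK κ₁ θ ≤ tK κ₂ θ := by
  rcases lt_or_ge 0 κ₁ with h₁ | h₁
  · exact tK_le_tK_of_pos hθ h₁ h₁₂ (hdom (h₁.trans_le h₁₂))
  rcases lt_or_ge κ₂ 0 with h₂ | h₂
  · exact tK_le_tK_of_neg hθ h₁₂ h₂
  · exact (tK_le_self h₁ hθ).trans (self_le_tK h₂ hθ hdom)

theorem mul_tK_le_mul_tK (hθ : 0 ≤ θ) (h₁₂ : κ₁ ≤ κ₂) (hdom : 0 < κ₂ → √κ₂ * θ < π / 2) :
    κ₁ * tK κ₁ θ ≤ κ₂ * tK κ₂ θ := by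
  have hdom₁ : 0 < κ₁ → √κ₁ * θ < π / 2 := fun h₁ ↦
    (mul_le_mul_of_nonneg_right (sqrt_le_sqrt h₁₂) hθ).trans_lt (hdom (h₁.trans_le h₁₂))
  rcases le_or_gt 0 κ₁ with h₁ | h₁
  · exact mul_le_mul h₁₂ (tK_le_tK hθ h₁₂ hdom) (tK_nonneg hθ hdom₁) (h₁.trans h₁₂)
  rcases lt_or_ge 0 κ₂ with h₂ | h₂
  · exact (mul_nonpos_of_nonpos_of_nonneg h₁.le (tK_nonneg hθ hdom₁)).trans
      (mul_nonneg h₂.le (tK_nonneg hθ hdom))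
  rw [mul_tK_of_nonpos h₁.le, mul_tK_of_nonpos h₂, neg_le_neg_iff]
  have hx : √(-κ₂) ≤ √(-κ₁) := sqrt_le_sqrt (neg_le_neg h₁₂)
  exact mul_le_mul hx (tanh_le_tanh (mul_le_mul_of_nonneg_right hx hθ))
    (tanh_nonneg (by positivity)) (sqrt_nonneg _)

end ComparisonTangent

theorem mul_tK_mul_le_mul_tK_mul {K a b θ : ℝ} (hθ : 0 ≤ θ) (ha : 0 ≤ a) (hab : a ≤ b)
    (hdom : 0 < K * b → √(K * b) * θ < π / 2) : K * tK (K * a) θ ≤ K * tK (K * b) θ := by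
  rcases le_total 0 K with hK | hK
  · exact mul_le_mul_of_nonneg_left (tK_le_tK hθ (mul_le_mul_of_nonneg_left hab hK) hdom) hK
  · refine mul_le_mul_of_nonpos_left (tK_le_tK hθ (mul_le_mul_of_nonpos_left hab hK) ?_) hK
    exact fun h ↦ absurd h (mul_nonpos_of_nonpos_of_nonneg hK ha).not_gt

theorem sqrt_div_mul_half_lt_pi_div_two {K m u : ℝ} (hm : 0 < m)
    (hu : 0 < K → u < π * √(m / K)) (hKm : 0 < K / m) : √(K / m) * (u / 2) < π / 2 := by
  have hK := (div_pos_iff_of_pos_right hm).1 hKm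
  have := hu hK
  rw [← inv_div K m, sqrt_inv, ← div_eq_mul_inv, lt_div_iff₀ (sqrt_pos.2 hKm)] at this
  linarith

theorem ENNReal.one_lt_toReal {N : ℝ≥0∞} (h : 1 < N) (hN : N ≠ ⊤) : 1 < N.toReal := by
  simpa using ENNReal.toReal_strict_mono hN h

section Psi

variable {K K' u : ℝ} {N N' : ℝ≥0∞}

theorem Psi_top (K u : ℝ) : Psi K ⊤ u = -K * u := if_pos rfl

theorem Psi_of_ne_top (h : N ≠ ⊤) : Psi K N u = -2 * K * tK (K / (N.toReal - 1)) (u / 2) :=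
  if_neg h

theorem Psi_le_Psi_left (hN : 1 < N) (hKK' : K' ≤ K) (hu : 0 ≤ u)
    (hdom : 0 < K → N ≠ ⊤ → u < π * √((N.toReal - 1) / K)) : Psi K N u ≤ Psi K' N u := by
  rcases eq_or_ne N ⊤ with rfl | hNtop
  · rw [Psi_top, Psi_top]
    nlinarith
  have hm : 0 < N.toReal - 1 := sub_pos.2 (ENNReal.one_lt_toReal hN hNtop)
  have key := mul_tK_le_mul_tK (θ := u / 2) (by positivity)
    (div_le_div_of_nonneg_right hKK' hm.le) (sqrt_div_mul_half_lt_pi_div_two hm (hdom · hNtop))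
  rw [div_mul_eq_mul_div, div_mul_eq_mul_div, div_le_div_iff_of_pos_right hm] at key
  rw [Psi_of_ne_top hNtop, Psi_of_ne_top hNtop]
  linarith

theorem Psi_le_Psi_right (hN : 1 < N) (hNN' : N ≤ N') (hu : 0 ≤ u)
    (hdom : 0 < K → N ≠ ⊤ → u < π * √((N.toReal - 1) / K)) : Psi K N u ≤ Psi K N' u := by
  rcases eq_or_ne N ⊤ with rfl | hNtop
  · rw [top_le_iff.1 hNN']
  have hm : 0 < N.toReal - 1 := sub_pos.2 (ENNReal.one_lt_toReal hN hNtop)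
  -- `Ψ_{K,N}(u) = -2K t_{K s}(u/2)` with `s = 1/(N-1)`, and `s = 0` gives `Ψ_{K,∞}`
  have key : ∀ s, 0 ≤ s → s ≤ (N.toReal - 1)⁻¹ →
      K * tK (K * s) (u / 2) ≤ K * tK (K / (N.toReal - 1)) (u / 2) := by
    intro s hs hsm
    rw [div_eq_mul_inv]
    refine mul_tK_mul_le_mul_tK_mul (by positivity) hs hsm ?_
    simpa only [div_eq_mul_inv] using sqrt_div_mul_half_lt_pi_div_two hm (hdom · hNtop)
  rw [Psi_of_ne_top hNtop]
  rcases eq_or_ne N' ⊤ with rfl | hN'top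
  · have := key 0 le_rfl (inv_nonneg.2 hm.le)
    rw [mul_zero, tK_zero_left] at this
    rw [Psi_top]
    linarith
  have hmm' : N.toReal - 1 ≤ N'.toReal - 1 := by
    linarith [ENNReal.toReal_mono hN'top hNN']
  have := key (N'.toReal - 1)⁻¹ (inv_nonneg.2 (hm.trans_le hmm').le) (inv_anti₀ hm hmm')
  rw [← div_eq_mul_inv] at this
  rw [Psi_of_ne_top hN'top]
  linarith

end Psi

theorem Psi_monotone_comparison (K K' : ℝ) (N N' : ℝ≥0∞)
    (hKK' : K' ≤ K) (hN : (2 : ℝ≥0∞) ≤ N) (hNN' : N ≤ N') (u : ℝ) (hu : 0 ≤ u)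
    (hdom : 0 < K → N ≠ ⊤ → u < Real.pi * Real.sqrt ((N.toReal - 1) / K)) :
    Psi K N u ≤ Psi K' N' u := by
  have hN1 : 1 < N := lt_of_lt_of_le (by norm_num) hN
  have hdom' : 0 < K' → N ≠ ⊤ → u < π * √((N.toReal - 1) / K') := fun hK' hNtop ↦ by
    have hm : 0 < N.toReal - 1 := sub_pos.2 (ENNReal.one_lt_toReal hN1 hNtop)
    refine (hdom (hK'.trans_le hKK') hNtop).trans_le ?_
    gcongr
  calc Psi K N u ≤ Psi K' N u := Psi_le_Psi_left hN1 hKK' hu hdom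
    _ ≤ Psi K' N' u := Psi_le_Psi_right hN1 hNN' hu hdom'
end

section
/- Let (M,d) be a compact metric space, and let c_n : M × M → [0,∞) be continuous functions converging pointwise and monotonically nondecreasingly to a continuous c. Then for any Borel probability measures μ, ν on M, the optimal transportation costs converge: lim_{n→∞} T_{c_n}(μ,ν) = T_c(μ,ν), where T_c(μ,ν) = inf over couplings π of μ and ν of ∫ c dπ. -/
open MeasureTheory Filter

/-- The optimal transportation cost between `μ` and `ν` for cost `c`. -/
noncomputable def transportCost {M : Type*} [MeasurableSpace M]
    (c : M × M → ℝ) (μ ν : Measure M) : ℝ :=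
  sInf {x : ℝ | ∃ π : Measure (M × M), IsProbabilityMeasure π ∧
    π.map Prod.fst = μ ∧ π.map Prod.snd = ν ∧ x = ∫ p, c p ∂π}

/-!
On a compact space, `c ↦ T_c(μ, ν)` is `1`-Lipschitz for the uniform norm on continuous costs,
since `∫ f dπ ≤ ∫ g dπ + ε` for every coupling `π` as soon as `f ≤ g + ε`. By Dini's theorem a
monotone sequence of continuous costs with continuous pointwise limit converges uniformly, so the
transport costs converge.
-/

section Couplings

variable {M : Type*} [MeasurableSpace M]

def couplings (μ ν : Measure M) : Set (Measure (M × M)) :=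
  {π | IsProbabilityMeasure π ∧ π.map Prod.fst = μ ∧ π.map Prod.snd = ν}

theorem transportCost_eq_sInf_image (c : M × M → ℝ) (μ ν : Measure M) :
    transportCost c μ ν = sInf ((fun π => ∫ p, c p ∂π) '' couplings μ ν) := by
  unfold transportCost couplings
  congr 1
  ext x
  constructor
  · rintro ⟨π, hπ, h₁, h₂, rfl⟩
    exact ⟨π, ⟨hπ, h₁, h₂⟩, rfl⟩
  · rintro ⟨π, ⟨hπ, h₁, h₂⟩, rfl⟩
    exact ⟨π, hπ, h₁, h₂, rfl⟩

variable [TopologicalSpace M] [CompactSpace M] [OpensMeasurableSpace (M × M)]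

theorem bddBelow_integral_image {c : M × M → ℝ} (hc : Continuous c) (μ ν : Measure M) :
    BddBelow ((fun π => ∫ p, c p ∂π) '' couplings μ ν) := by
  obtain ⟨m, hm⟩ := (isCompact_range hc).bddBelow
  refine ⟨m, ?_⟩
  rintro _ ⟨π, ⟨hπ, -, -⟩, rfl⟩
  calc m = ∫ _, m ∂π := by simp
    _ ≤ ∫ p, c p ∂π :=
      integral_mono (integrable_const m) (hc.integrable_of_hasCompactSupport
        (HasCompactSupport.of_compactSpace c)) fun p => hm ⟨p, rfl⟩

theorem transportCost_le_add {f g : M × M → ℝ} (hf : Continuous f) (hg : Continuous g)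
    {ε : ℝ} (hε : 0 ≤ ε) (hfg : ∀ p, f p ≤ g p + ε) (μ ν : Measure M) :
    transportCost f μ ν ≤ transportCost g μ ν + ε := by
  rw [transportCost_eq_sInf_image, transportCost_eq_sInf_image]
  rcases (couplings μ ν).eq_empty_or_nonempty with hempty | hne
  · simpa [hempty] using hε
  rw [← sub_le_iff_le_add]
  refine le_csInf (hne.image _) ?_
  rintro _ ⟨π, hπ, rfl⟩
  have : IsProbabilityMeasure π := hπ.1
  have hf_int : Integrable f π :=
    hf.integrable_of_hasCompactSupport (HasCompactSupport.of_compactSpace f)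
  have hg_int : Integrable g π :=
    hg.integrable_of_hasCompactSupport (HasCompactSupport.of_compactSpace g)
  have hle : sInf ((fun π => ∫ p, f p ∂π) '' couplings μ ν) ≤ ∫ p, f p ∂π :=
    csInf_le (bddBelow_integral_image hf μ ν) ⟨π, hπ, rfl⟩
  have hint : ∫ p, f p ∂π ≤ ∫ p, g p ∂π + ε := by
    calc ∫ p, f p ∂π ≤ ∫ p, (g p + ε) ∂π :=
          integral_mono hf_int (hg_int.add (integrable_const ε)) hfg
      _ = ∫ p, g p ∂π + ε := by simp [integral_add hg_int (integrable_const ε)]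
  linarith

theorem abs_transportCost_sub_le {f g : M × M → ℝ} (hf : Continuous f) (hg : Continuous g)
    {ε : ℝ} (hε : 0 ≤ ε) (hfg : ∀ p, |f p - g p| ≤ ε) (μ ν : Measure M) :
    |transportCost f μ ν - transportCost g μ ν| ≤ ε := by
  rw [abs_sub_le_iff]
  constructor
  · linarith [transportCost_le_add hf hg hε (fun p => by linarith [abs_le.1 (hfg p)]) μ ν]
  · linarith [transportCost_le_add hg hf hε (fun p => by linarith [abs_le.1 (hfg p)]) μ ν]

theorem tendsto_transportCost_of_tendstoUniformly {ι : Type*} {l : Filter ι}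
    {c : ι → M × M → ℝ} {f : M × M → ℝ} (hc : ∀ i, Continuous (c i)) (hf : Continuous f)
    (hcf : TendstoUniformly c f l) (μ ν : Measure M) :
    Tendsto (fun i => transportCost (c i) μ ν) l (nhds (transportCost f μ ν)) := by
  rw [Metric.tendsto_nhds]
  intro ε hε
  filter_upwards [Metric.tendstoUniformly_iff.1 hcf (ε / 2) (half_pos hε)] with i hi
  rw [Real.dist_eq]
  refine (abs_transportCost_sub_le (hc i) hf (half_pos hε).le (fun p => ?_) μ ν).trans_lt
    (half_lt_self hε)
  rw [abs_sub_comm, ← Real.dist_eq]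
  exact (hi p).le

end Couplings

theorem transportCost_tendsto_of_monotone_general
    {M : Type*} [MetricSpace M] [CompactSpace M] [MeasurableSpace M]
    [BorelSpace M]
    (c : ℕ → M × M → ℝ) (climit : M × M → ℝ)
    (hcont : ∀ n, Continuous (c n)) (hclim : Continuous climit)
    (hmono : ∀ n p, c n p ≤ c (n + 1) p)
    (hptwise : ∀ p, Tendsto (fun n => c n p) atTop (nhds (climit p)))
    (μ ν : Measure M) :
    Tendsto (fun n => transportCost (c n) μ ν) atTop
      (nhds (transportCost climit μ ν)) :=
  tendsto_transportCost_of_tendstoUniformly hcont hclim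
    ((monotone_nat_of_le_succ hmono).tendstoUniformly_of_forall_tendsto hcont hclim hptwise) μ ν

theorem transportCost_tendsto_of_monotone
    {M : Type*} [MetricSpace M] [CompactSpace M] [MeasurableSpace M]
    [BorelSpace M]
    (c : ℕ → M × M → ℝ) (climit : M × M → ℝ)
    (hcont : ∀ n, Continuous (c n)) (hclim : Continuous climit)
    (hnonneg : ∀ n p, 0 ≤ c n p)
    (hmono : ∀ n p, c n p ≤ c (n + 1) p)
    (hptwise : ∀ p, Tendsto (fun n => c n p) atTop (nhds (climit p)))
    (μ ν : Measure M) [IsProbabilityMeasure μ] [IsProbabilityMeasure ν] :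
    Tendsto (fun n => transportCost (c n) μ ν) atTop
      (nhds (transportCost climit μ ν)) :=
  transportCost_tendsto_of_monotone_general c climit hcont hclim hmono hptwise μ ν
end
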